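/- arXiv:1208.5283 — 4 statements merged into one kernel-verified Lean document; each statement's English description precedes it below -/
import Mathlib

section
/- Let G be a finite group that is p-solvable for a prime p, and let P be a Sylow p-subgroup of G. Then for every g ∈ G, the coset gP contains an element of order prime to p. -/
open Pointwise

/-- A finite group is `p`-solvable if it has a subnormal series each of whose factors is
either a `p`-group or has order prime to `p` (equivalently, every composition factor is a
`p`-group or a `p'`-group).  The factor at stage `i` has order
`(s i.castSucc).relindex (s i.succ)`. -/
def IsPSolvable (p : ℕ) (G : Type*) [Group G] : Prop :=
  ∃ (n : ℕ) (s : Fin (n + 1) → Subgroup G),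
    s 0 = ⊥ ∧ s (Fin.last n) = ⊤ ∧
    ∀ i : Fin n,
      s i.castSucc ≤ s i.succ ∧
      ((s i.castSucc).subgroupOf (s i.succ)).Normal ∧
      ((∃ k : ℕ, (s i.castSucc).relIndex (s i.succ) = p ^ k) ∨
        ¬ p ∣ (s i.castSucc).relIndex (s i.succ))

/-!
Induction on `|G|`. A nontrivial `p`-solvable group `G` has a nontrivial normal subgroup `N` that
is a `p`-group or a `p'`-group: take a normal subgroup `K < G` with `G / K` a `p`- or `p'`-group;
by induction `K` has such a subgroup, so the largest normal `p`-subgroup (resp. `p'`-subgroup)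
of `K` is nontrivial, and being characteristic in `K` it is normal in `G`.
By induction again, the image of `gP` in `G / N` contains a `p'`-element, the image of some
`x ∈ gP`. If `N` is a `p'`-group, `x` itself is a `p'`-element. If `N` is a `p`-group, then
`N ≤ P`, so `xN ⊆ gP`, and `xN` contains a power of `x` of order prime to `p`.
-/

open Subgroup

def DvdMulClosed (Φ : ℕ → Prop) : Prop :=
  Φ 1 ∧ ∀ ⦃a b c : ℕ⦄, Φ a → Φ b → c ∣ a * b → Φ c

theorem DvdMulClosed.of_dvd {Φ : ℕ → Prop} (hΦ : DvdMulClosed Φ) {a c : ℕ} (ha : Φ a)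
    (hca : c ∣ a) : Φ c :=
  hΦ.2 ha hΦ.1 (by rwa [mul_one])

theorem dvdMulClosed_eq_pow {p : ℕ} (hp : p.Prime) : DvdMulClosed (fun n => ∃ k, n = p ^ k) := by
  refine ⟨⟨0, rfl⟩, ?_⟩
  rintro _ _ c ⟨i, rfl⟩ ⟨j, rfl⟩ hc
  rw [← pow_add] at hc
  obtain ⟨k, -, rfl⟩ := (Nat.dvd_prime_pow hp).mp hc
  exact ⟨k, rfl⟩

theorem dvdMulClosed_not_dvd {p : ℕ} (hp : p.Prime) : DvdMulClosed (fun n => ¬ p ∣ n) :=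
  ⟨hp.not_dvd_one, fun _ _ _ ha hb hc hpc => (hp.dvd_mul.mp (hpc.trans hc)).elim ha hb⟩

theorem eq_pow_or_not_dvd_of_dvd {p : ℕ} (hp : p.Prime) {a b : ℕ} (hab : a ∣ b) :
    ((∃ k, b = p ^ k) ∨ ¬ p ∣ b) → (∃ k, a = p ^ k) ∨ ¬ p ∣ a :=
  Or.imp (fun h => (dvdMulClosed_eq_pow hp).of_dvd h hab)
    (fun h => (dvdMulClosed_not_dvd hp).of_dvd h hab)

theorem Subgroup.relIndex_inf_dvd_of_le_normalizer {G : Type*} [Group G] {A B : Subgroup G}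
    (C : Subgroup G) (hAB : A ≤ B) (hB : B ≤ normalizer A) :
    A.relIndex (C ⊓ B) ∣ A.relIndex B := by
  have := (normal_subgroupOf_iff_le_normalizer hAB).mpr hB
  rw [← relIndex_subgroupOf inf_le_right]
  exact relIndex_dvd_index_of_normal _ _

namespace IsPSolvable

variable {p : ℕ} {G H : Type*} [Group G] [Group H]

theorem comap_of_injective (hp : p.Prime) (hG : IsPSolvable p G) {f : H →* G}
    (hf : Function.Injective f) : IsPSolvable p H := by
  obtain ⟨n, s, h0, hn, hs⟩ := hG
  refine ⟨n, fun i => (s i).comap f, by simp [h0, MonoidHom.ker_eq_bot_iff, hf], by simp [hn],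
    fun i => ?_⟩
  obtain ⟨hle, hnormal, hidx⟩ := hs i
  rw [normal_subgroupOf_iff_le_normalizer hle] at hnormal
  refine ⟨comap_mono hle, (normal_subgroupOf_iff_le_normalizer (comap_mono hle)).mpr
    ((comap_mono hnormal).trans (le_normalizer_comap f)), ?_⟩
  rw [relIndex_comap, map_comap_eq]
  exact eq_pow_or_not_dvd_of_dvd hp (relIndex_inf_dvd_of_le_normalizer _ hle hnormal) hidx

theorem map_of_surjective (hp : p.Prime) (hG : IsPSolvable p G) {f : G →* H}
    (hf : Function.Surjective f) : IsPSolvable p H := by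
  obtain ⟨n, s, h0, hn, hs⟩ := hG
  refine ⟨n, fun i => (s i).map f, by simp [h0], by simp [hn, map_top_of_surjective f hf],
    fun i => ?_⟩
  obtain ⟨hle, hnormal, hidx⟩ := hs i
  rw [normal_subgroupOf_iff_le_normalizer hle] at hnormal
  refine ⟨map_mono hle, (normal_subgroupOf_iff_le_normalizer (map_mono hle)).mpr
    ((map_mono hnormal).trans (le_normalizer_map f)), ?_⟩
  rw [← relIndex_comap, comap_map_eq]
  exact eq_pow_or_not_dvd_of_dvd hp (relIndex_dvd_of_le_left _ le_sup_left) hidx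

theorem exists_normal_ne_top [Nontrivial G] (hG : IsPSolvable p G) :
    ∃ K : Subgroup G, K.Normal ∧ K ≠ ⊤ ∧ ((∃ k, K.index = p ^ k) ∨ ¬ p ∣ K.index) := by
  obtain ⟨n, s, h0, hn, hs⟩ := hG
  obtain ⟨i, hi, hmin⟩ := wellFounded_lt.has_min {i | s i = ⊤} ⟨Fin.last n, hn⟩
  obtain ⟨j, rfl⟩ : ∃ j, Fin.succ j = i :=
    Fin.exists_succ_eq_of_ne_zero fun h => bot_ne_top (h0 ▸ h ▸ hi : (⊥ : Subgroup G) = ⊤)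
  obtain ⟨-, hnormal, hidx⟩ := hs j
  rw [show s j.succ = ⊤ from hi] at hnormal hidx
  rw [relIndex_top_right] at hidx
  refine ⟨s j.castSucc, ?_, fun h => hmin _ h Fin.castSucc_lt_succ, hidx⟩
  rw [← normalizer_eq_top_iff, eq_top_iff]
  exact (normal_subgroupOf_iff_le_normalizer le_top).mp hnormal

end IsPSolvable

namespace Subgroup

variable {G : Type*} [Group G]

theorem card_sup_dvd_card_mul_card (H K : Subgroup G) [K.Normal] :
    Nat.card ↥(H ⊔ K) ∣ Nat.card H * Nat.card K := by
  rw [← relIndex_bot_left, ← relIndex_mul_relIndex ⊥ K (H ⊔ K) bot_le le_sup_right,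
    relIndex_sup_right, relIndex_bot_left, mul_comm]
  exact mul_dvd_mul_right (relIndex_dvd_card K H) _

-- `O_p(G)` and `O_{p'}(G)` for `Φ n := ∃ k, n = p ^ k` and `Φ n := ¬ p ∣ n`.
variable (G) in
def radical (Φ : ℕ → Prop) : Subgroup G :=
  sSup {N | N.Normal ∧ Φ (Nat.card N)}

variable {Φ : ℕ → Prop}

theorem le_radical {N : Subgroup G} [hN : N.Normal] (h : Φ (Nat.card N)) : N ≤ radical G Φ :=
  le_sSup ⟨hN, h⟩

instance radical_characteristic : (radical G Φ).Characteristic := by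
  refine characteristic_iff_le_comap.mpr fun φ => sSup_le fun N ⟨hN, hΦ⟩ => ?_
  rw [← map_le_iff_le_comap]
  have := hN.map φ.toMonoidHom φ.surjective
  exact le_radical (by rwa [card_map_of_injective φ.injective])

theorem _root_.DvdMulClosed.card_radical [Finite G] (hΦ : DvdMulClosed Φ) :
    Φ (Nat.card (radical G Φ)) := by
  have hsup : SupClosed {N : Subgroup G | N.Normal ∧ Φ (Nat.card N)} := by
    rintro A ⟨hA, hΦA⟩ B ⟨hB, hΦB⟩
    exact ⟨sup_normal A B, hΦ.2 hΦA hΦB (card_sup_dvd_card_mul_card A B)⟩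
  exact (hsup.sSup_mem (Set.toFinite _) ⟨normal_bot, by rw [card_bot]; exact hΦ.1⟩ le_rfl).2

end Subgroup

theorem DvdMulClosed.exists_normal_ne_bot {G : Type*} [Group G] [Finite G] {Φ : ℕ → Prop}
    (hΦ : DvdMulClosed Φ) {K : Subgroup G} [K.Normal] {Q : Subgroup K} [Q.Normal]
    (hQ : Q ≠ ⊥) (hΦQ : Φ (Nat.card Q)) :
    ∃ N : Subgroup G, N.Normal ∧ N ≠ ⊥ ∧ Φ (Nat.card N) := by
  refine ⟨(radical K Φ).map K.subtype, inferInstance, ?_, ?_⟩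
  · rw [Ne, map_eq_bot_iff_of_injective _ K.subtype_injective, ← Ne, ← bot_lt_iff_ne_bot]
    exact (bot_lt_iff_ne_bot.mpr hQ).trans_le (le_radical hΦQ)
  · rw [card_map_of_injective K.subtype_injective]
    exact hΦ.card_radical

theorem IsPSolvable.exists_normal_ne_bot {p : ℕ} {G : Type*} [Group G] [Finite G] [Nontrivial G]
    (hp : p.Prime) (hG : IsPSolvable p G) :
    ∃ N : Subgroup G, N.Normal ∧ N ≠ ⊥ ∧ ((∃ k, Nat.card N = p ^ k) ∨ ¬ p ∣ Nat.card N) := by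
  induction hn : Nat.card G using Nat.strong_induction_on generalizing G with | _ n ih =>
  obtain ⟨K, hK, hKtop, hKidx⟩ := hG.exists_normal_ne_top
  rcases eq_or_ne K ⊥ with rfl | hKbot
  · exact ⟨⊤, inferInstance, top_ne_bot, by rwa [card_top, ← index_bot]⟩
  have : Nontrivial K := (nontrivial_iff_ne_bot K).mpr hKbot
  have hlt : Nat.card K < n :=
    hn ▸ (card_le_card_group K).lt_of_ne (mt (eq_top_of_card_eq K) hKtop)
  obtain ⟨Q, hQ, hQbot, hpQ | hpQ⟩ := ih _ hlt (hG.comap_of_injective hp K.subtype_injective) rfl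
  · obtain ⟨N, hN, hNbot, hpN⟩ := (dvdMulClosed_eq_pow hp).exists_normal_ne_bot hQbot hpQ
    exact ⟨N, hN, hNbot, .inl hpN⟩
  · obtain ⟨N, hN, hNbot, hpN⟩ := (dvdMulClosed_not_dvd hp).exists_normal_ne_bot hQbot hpQ
    exact ⟨N, hN, hNbot, .inr hpN⟩

section OrderOf

variable {G H : Type*} [Group G] [Group H]

theorem orderOf_dvd_orderOf_map_mul_card_ker (f : G →* H) (x : G) :
    orderOf x ∣ orderOf (f x) * Nat.card f.ker := by
  have hx : x ^ orderOf (f x) ∈ f.ker := by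
    rw [MonoidHom.mem_ker, map_pow, pow_orderOf_eq_one]
  rw [orderOf_dvd_iff_pow_eq_one, pow_mul, ← orderOf_dvd_iff_pow_eq_one]
  exact f.ker.orderOf_dvd_natCard hx

theorem exists_map_eq_not_dvd_orderOf {p : ℕ} (hp : p.Prime) (f : G →* H) {x : G}
    (hx : IsOfFinOrder x) (hfx : ¬ p ∣ orderOf (f x)) :
    ∃ y, f y = f x ∧ ¬ p ∣ orderOf y := by
  -- `x ^ p ^ a` strips the `p`-part off the order of `x`; as `p ^ a` is prime to the order
  -- of `f x`, a further power of it maps back onto `f x`.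
  set a := (orderOf x).factorization p
  have hz : ¬ p ∣ orderOf (x ^ p ^ a) := by
    rw [orderOf_pow_of_dvd (pow_ne_zero a hp.ne_zero) (Nat.ordProj_dvd _ p)]
    exact Nat.not_dvd_ordCompl hp hx.orderOf_pos.ne'
  obtain ⟨m, hm⟩ := exists_pow_eq_self_of_coprime
    (((Nat.Prime.coprime_iff_not_dvd hp).mpr hfx).pow_left a)
  exact ⟨(x ^ p ^ a) ^ m, by rw [map_pow, map_pow, hm], fun h => hz (h.trans (orderOf_pow_dvd m))⟩

end OrderOf

theorem exists_mem_smul_not_dvd_orderOf_of_mk {p : ℕ} [Fact p.Prime] {G : Type*} [Group G]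
    [Finite G] {N : Subgroup G} [N.Normal] (hN : (∃ k, Nat.card N = p ^ k) ∨ ¬ p ∣ Nat.card N)
    (P : Sylow p G) {g x : G} (hx : x ∈ g • (P : Set G)) (hxp : ¬ p ∣ orderOf (x : G ⧸ N)) :
    ∃ y ∈ g • (P : Set G), ¬ p ∣ orderOf y := by
  have hp : p.Prime := Fact.out
  rcases hN with ⟨k, hk⟩ | hN
  · obtain ⟨y, hyx, hyp⟩ :=
      exists_map_eq_not_dvd_orderOf hp (QuotientGroup.mk' N) (isOfFinOrder_of_finite x) hxp
    refine ⟨y, ?_, hyp⟩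
    have hxy : x⁻¹ * y ∈ N := by
      rw [← QuotientGroup.ker_mk' N, MonoidHom.mem_ker, map_mul, map_inv, hyx, inv_mul_cancel]
    rw [mem_leftCoset_iff, SetLike.mem_coe] at hx ⊢
    simpa only [mul_assoc, mul_inv_cancel_left] using
      mul_mem hx ((IsPGroup.of_card hk).le_sylow_of_normal P hxy)
  · exact ⟨x, hx, (dvdMulClosed_not_dvd hp).2 hxp (by rwa [QuotientGroup.ker_mk'])
      (orderOf_dvd_orderOf_map_mul_card_ker (QuotientGroup.mk' N) x)⟩

/-- In a finite `p`-solvable group, every coset of a Sylow `p`-subgroup contains a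
`p'`-element. -/
theorem coset_of_sylow_contains_p_prime_element
    (p : ℕ) [Fact p.Prime] (G : Type*) [Group G] [Finite G]
    (hps : IsPSolvable p G) (P : Sylow p G) (g : G) :
    ∃ x ∈ g • ((P : Subgroup G) : Set G), ¬ p ∣ orderOf x := by
  have hp : p.Prime := Fact.out
  induction hn : Nat.card G using Nat.strong_induction_on generalizing G with | _ n ih =>
  rcases subsingleton_or_nontrivial G with hG | hG
  · exact ⟨g, ⟨1, one_mem _, mul_one g⟩, by simp [Subsingleton.elim g 1, hp.not_dvd_one]⟩
  obtain ⟨N, hN, hNbot, hpN⟩ := hps.exists_normal_ne_bot hp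
  have hπ := QuotientGroup.mk'_surjective N
  have hlt : Nat.card (G ⧸ N) < n := by
    rw [← hn, N.card_eq_card_quotient_mul_card_subgroup]
    exact lt_mul_of_one_lt_right Nat.card_pos (N.one_lt_card_iff_ne_bot.mpr hNbot)
  obtain ⟨_, hx, hxp⟩ := ih _ hlt (G ⧸ N) (hps.map_of_surjective hp hπ) (P.mapSurjective hπ)
    (QuotientGroup.mk' N g) rfl
  rw [Sylow.coe_mapSurjective, coe_map, ← Set.image_smul_distrib] at hx
  obtain ⟨x, hx, rfl⟩ := hx
  exact exists_mem_smul_not_dvd_orderOf_of_mk hpN P hx hxp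
end

section
/- Let q be a prime power with q ≡ 1 (mod p) for an odd prime p, and suppose p^2 does not divide q − 1. Let θ ∈ F_q be a primitive p-th root of unity. An element g of PSL_2(q) represented by a matrix in SL_2(q) with trace t has order divisible by p if and only if t = e^p θ^j + (e^p θ^j)^{-1} for some nonzero e ∈ F_q and some integer j with 0 < j < p, provided g is diagonalizable over F_q. -/
open Matrix
open scoped MatrixGroups

lemma key_units {F : Type*} [Field F] [Fintype F] {p m : ℕ} (hp : p.Prime)
    (hcard : Nat.card Fˣ = p * m) (hpm : ¬ p ∣ m)
    (θ' : Fˣ) (hθ' : orderOf θ' = p) (a : Fˣ) :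
    p ∣ orderOf a ↔ ∃ (e : Fˣ) (j : ℕ), 0 < j ∧ j < p ∧ a = e ^ p * θ' ^ j := by
  haveI : NeZero p := ⟨hp.pos.ne'⟩
  have backward : ∀ (e : Fˣ) (j : ℕ), 0 < j → j < p →
      p ∣ orderOf (e ^ p * θ' ^ j) := by
    intro e j hj0 hjp
    by_contra hnd
    have h1 : orderOf (e ^ p * θ' ^ j) ∣ p * m := hcard ▸ orderOf_dvd_natCard _
    have h2 : orderOf (e ^ p * θ' ^ j) ∣ m :=
      (Nat.Coprime.dvd_of_dvd_mul_left ((hp.coprime_iff_not_dvd.mpr hnd).symm) h1)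
    have h3 : (e ^ p * θ' ^ j) ^ m = 1 := orderOf_dvd_iff_pow_eq_one.mp h2
    have h4 : (e ^ p) ^ m = 1 := by
      rw [← pow_mul, ← hcard]
      exact pow_card_eq_one'
    have h5 : θ' ^ (j * m) = 1 := by
      rw [mul_pow, h4, one_mul, ← pow_mul] at h3
      exact h3
    have h6 : p ∣ j * m := hθ' ▸ orderOf_dvd_of_pow_eq_one h5
    rcases (hp.dvd_mul).mp h6 with h | h
    · exact absurd h (Nat.not_dvd_of_pos_of_lt hj0 hjp)
    · exact hpm h
  constructor
  · intro hdvd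
    obtain ⟨ζ, hζ⟩ := IsCyclic.exists_generator (α := Fˣ)
    have hζord : orderOf ζ = p * m := by
      rw [orderOf_eq_card_of_forall_mem_zpowers hζ, hcard]
    obtain ⟨n, hn⟩ : ∃ n : ℕ, ζ ^ n = a := by
      obtain ⟨n, hn⟩ := mem_powers_iff_mem_zpowers.mpr (hζ a); exact ⟨n, hn⟩
    obtain ⟨r, hr⟩ : ∃ r : ℕ, ζ ^ r = θ' := by
      obtain ⟨r, hr⟩ := mem_powers_iff_mem_zpowers.mpr (hζ θ'); exact ⟨r, hr⟩
    have hpn : ¬ p ∣ n := by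
      rintro ⟨c, rfl⟩
      have ham : a ^ m = 1 := by
        rw [← hn, ← pow_mul]
        have h : p * c * m = (p * m) * c := by ring
        rw [h, pow_mul, ← hζord, pow_orderOf_eq_one, one_pow]
      exact hpm (Nat.dvd_trans hdvd (orderOf_dvd_of_pow_eq_one ham))
    have hθp1 : ζ ^ (r * p) = 1 := by
      rw [pow_mul, hr, ← hθ', pow_orderOf_eq_one]
    have hmr : m ∣ r := by
      have h1 : p * m ∣ r * p := hζord ▸ orderOf_dvd_of_pow_eq_one hθp1
      have h2 : p * m ∣ p * r := by rwa [mul_comm r p] at h1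
      exact (mul_dvd_mul_iff_left hp.pos.ne').mp h2
    obtain ⟨i, rfl⟩ := hmr
    have hpi : ¬ p ∣ i := by
      rintro ⟨i', rfl⟩
      have h1 : θ' = 1 := by
        rw [← hr]
        have h : m * (p * i') = (p * m) * i' := by ring
        rw [h, pow_mul, ← hζord, pow_orderOf_eq_one, one_pow]
      rw [h1, orderOf_one] at hθ'
      exact hp.one_lt.ne' hθ'.symm
    have hmi : ((m * i : ℕ) : ZMod p) ≠ 0 := by
      rw [Ne, ZMod.natCast_eq_zero_iff]
      intro h
      rcases hp.dvd_mul.mp h with h | h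
      · exact hpm h
      · exact hpi h
    haveI := Fact.mk hp
    set M : ZMod p := ((m * i : ℕ) : ZMod p) with hM
    set j : ℕ := (((n : ZMod p)) * M⁻¹).val with hj
    have hjcast : ((j : ℕ) : ZMod p) = ((n : ZMod p)) * M⁻¹ := by
      rw [hj, ZMod.natCast_val, ZMod.cast_id]
    have hjval : ((m * i * j : ℕ) : ZMod p) = ((n : ℕ) : ZMod p) := by
      rw [Nat.cast_mul, hjcast, ← hM, mul_comm ((n : ZMod p)) M⁻¹, ← mul_assoc,
        mul_inv_cancel₀ hmi, one_mul]
    have hjlt : j < p := ZMod.val_lt _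
    have hj0 : 0 < j := by
      rcases Nat.eq_zero_or_pos j with h | h
      · exfalso
        rw [h, Nat.mul_zero] at hjval
        apply hpn
        rw [← ZMod.natCast_eq_zero_iff, ← hjval, Nat.cast_zero]
      · exact h
    have hdvdz : (p : ℤ) ∣ (n : ℤ) - (m * i * j : ℕ) :=
      Nat.ModEq.dvd ((ZMod.natCast_eq_natCast_iff _ _ _).mp hjval)
    obtain ⟨c, hc⟩ := hdvdz
    refine ⟨ζ ^ c, j, hj0, hjlt, ?_⟩
    have key : (ζ ^ c) ^ p * θ' ^ j = ζ ^ ((n : ℤ)) := by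
      rw [← hr, ← zpow_natCast ζ (m * i), ← zpow_natCast (ζ ^ ((m * i : ℕ) : ℤ)) j,
        ← zpow_natCast (ζ ^ c) p, ← _root_.zpow_mul, ← _root_.zpow_mul, ← _root_.zpow_add]
      congr 1
      have hc' : (n : ℤ) - (m : ℤ) * i * j = p * c := by push_cast at hc; linarith
      push_cast
      linarith
    rw [← hn, key]
    exact (zpow_natCast ζ n).symm
  · rintro ⟨e, j, hj0, hjp, rfl⟩
    exact backward e j hj0 hjp

/-- Let `q ≡ 1 (mod p)` with `p` odd and `p² ∤ q - 1`, and let `θ ∈ F_q` be a primitive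
`p`-th root of unity.  An element of `PSL₂(q)` represented by a matrix `g ∈ SL₂(q)` which
is diagonalizable over `F_q` has order divisible by `p` if and only if its trace is of
the form `e^p θ^j + (e^p θ^j)⁻¹` with `e ∈ F_q` nonzero and `0 < j < p`. -/
theorem order_divisible_iff_trace
    (p : ℕ) (hp : p.Prime) (hodd : Odd p)
    (F : Type*) [Field F] [Fintype F]
    (hq1 : p ∣ Fintype.card F - 1) (hq2 : ¬ p ^ 2 ∣ Fintype.card F - 1)
    (θ : F) (hθ : IsPrimitiveRoot θ p)
    (g : SpecialLinearGroup (Fin 2) F)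
    (hdiag : ∃ (B : GL (Fin 2) F) (d : Fin 2 → F),
      (B : Matrix (Fin 2) (Fin 2) F) * g * (B⁻¹ : GL (Fin 2) F) = diagonal d) :
    p ∣ orderOf
        (QuotientGroup.mk g : Matrix.ProjectiveSpecialLinearGroup (Fin 2) F) ↔
      ∃ (e : F) (j : ℕ), e ≠ 0 ∧ 0 < j ∧ j < p ∧
        Matrix.trace (g : Matrix (Fin 2) (Fin 2) F) =
          e ^ p * θ ^ j + (e ^ p * θ ^ j)⁻¹ := by
  obtain ⟨B, d, h1⟩ := hdiag
  -- determinant facts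
  have hBB : (B : Matrix (Fin 2) (Fin 2) F) * ((B⁻¹ : GL (Fin 2) F) : Matrix (Fin 2) (Fin 2) F)
      = 1 := by
    rw [← Matrix.GeneralLinearGroup.coe_mul, mul_inv_cancel, Units.val_one]
  have hBB' : ((B⁻¹ : GL (Fin 2) F) : Matrix (Fin 2) (Fin 2) F) * (B : Matrix (Fin 2) (Fin 2) F)
      = 1 := by
    rw [← Matrix.GeneralLinearGroup.coe_mul, inv_mul_cancel, Units.val_one]
  have hdet : d 0 * d 1 = 1 := by
    have h2 := congrArg Matrix.det h1
    rw [det_mul, det_mul, g.det_coe, mul_one, ← det_mul, hBB, det_one, det_diagonal,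
      Fin.prod_univ_two] at h2
    exact h2.symm
  have ha : d 0 ≠ 0 := left_ne_zero_of_mul_eq_one hdet
  have hd1 : d 1 = (d 0)⁻¹ := eq_inv_of_mul_eq_one_right hdet
  -- trace
  have htr : Matrix.trace (g : Matrix (Fin 2) (Fin 2) F) = d 0 + (d 0)⁻¹ := by
    have h2 := congrArg Matrix.trace h1
    rw [trace_mul_comm ((B : Matrix (Fin 2) (Fin 2) F) * (g : Matrix (Fin 2) (Fin 2) F)), ← mul_assoc, hBB', one_mul,
      trace_diagonal, Fin.sum_univ_two, hd1] at h2
    exact h2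
  -- order of g equals order of d 0
  set u : GL (Fin 2) F := B * Matrix.SpecialLinearGroup.toGL g * B⁻¹ with hu
  have huval : (u : Matrix (Fin 2) (Fin 2) F) = diagonal d := by
    rw [hu, Units.val_mul, Units.val_mul]
    exact h1
  have hogu : orderOf g = orderOf u := by
    have h2 : orderOf u = orderOf (Matrix.SpecialLinearGroup.toGL g) := by
      have : u = (MulAut.conj B) (Matrix.SpecialLinearGroup.toGL g) := by
        rw [MulAut.conj_apply, hu]
      rw [this]
      exact orderOf_injective (MulAut.conj B).toMonoidHom (MulEquiv.injective _) _
    rw [h2]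
    refine (orderOf_injective (Matrix.SpecialLinearGroup.toGL) ?_ g).symm
    intro x y hxy
    apply Subtype.coe_injective
    have := congrArg Units.val hxy
    exact this
  have hiff : ∀ n : ℕ, u ^ n = 1 ↔ (d 0) ^ n = 1 := by
    intro n
    rw [Units.ext_iff, Units.val_pow_eq_pow_val, Units.val_one, huval, Matrix.diagonal_pow]
    constructor
    · intro h
      have h4 := congrFun (congrFun h 0) 0
      simpa using h4
    · intro h
      have hd1k : (d 1) ^ n = 1 := by rw [hd1, inv_pow, h, inv_one]
      have hfun : d ^ n = fun _ => 1 := by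
        funext i
        fin_cases i
        · simpa using h
        · simpa using hd1k
      rw [hfun, Matrix.diagonal_one]
  have hog : orderOf g = orderOf (d 0) := by
    rw [hogu]
    exact orderOf_eq_orderOf_iff.mpr hiff
  -- PSL order
  set k := orderOf (QuotientGroup.mk g : Matrix.ProjectiveSpecialLinearGroup (Fin 2) F) with hk
  have hk1 : k ∣ orderOf g := orderOf_map_dvd (QuotientGroup.mk' _) g
  have hz : g ^ k ∈ Subgroup.center (SpecialLinearGroup (Fin 2) F) := by
    rw [← QuotientGroup.eq_one_iff, QuotientGroup.mk_pow, hk]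
    exact pow_orderOf_eq_one _
  have hsq : (g ^ k) ^ 2 = 1 := by
    obtain ⟨r, hr1, hr2⟩ := Matrix.SpecialLinearGroup.mem_center_iff.mp hz
    rw [Fintype.card_fin] at hr1
    have hcoe : (((g ^ k) ^ 2 : SpecialLinearGroup (Fin 2) F) : Matrix (Fin 2) (Fin 2) F)
        = 1 := by
      rw [Matrix.SpecialLinearGroup.coe_pow, ← hr2, ← map_pow, hr1, _root_.map_one]
    exact Subtype.coe_injective (hcoe.trans (Matrix.SpecialLinearGroup.coe_one).symm)
  have hgk : orderOf g ∣ k * 2 := orderOf_dvd_of_pow_eq_one (by rw [pow_mul]; exact hsq)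
  have hpsl : p ∣ k ↔ p ∣ orderOf g := by
    constructor
    · intro h; exact h.trans hk1
    · intro h
      have h2 : p ∣ k * 2 := h.trans hgk
      have hcop : Nat.Coprime p 2 := hodd.coprime_two_right
      exact hcop.dvd_of_dvd_mul_right h2
  -- units setup
  set m := (Fintype.card F - 1) / p with hm
  have hcardm : Nat.card Fˣ = p * m := by
    rw [Nat.card_units, Nat.card_eq_fintype_card, hm, Nat.mul_div_cancel' hq1]
  have hpm : ¬ p ∣ m := by
    intro h
    apply hq2
    obtain ⟨c, hc⟩ := h
    rw [← Nat.mul_div_cancel' hq1, ← hm, hc, pow_two]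
    exact ⟨c, by ring⟩
  have hθ0 : θ ≠ 0 := by
    intro h
    have := hθ.pow_eq_one
    rw [h, zero_pow hp.pos.ne'] at this
    exact zero_ne_one this
  set θ' : Fˣ := Units.mk0 θ hθ0 with hθ'
  have hθord : orderOf θ' = p := by
    rw [← orderOf_units (y := θ')]
    exact (hθ.eq_orderOf).symm
  set a' : Fˣ := Units.mk0 (d 0) ha with ha'
  have hoa : orderOf (d 0) = orderOf a' := orderOf_units (y := a')
  rw [hpsl, hog, hoa]
  constructor
  · intro hdvd
    obtain ⟨e', j, hj0, hjp, he⟩ := (key_units hp hcardm hpm θ' hθord a').mp hdvd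
    refine ⟨(e' : F), j, e'.ne_zero, hj0, hjp, ?_⟩
    have hval : d 0 = (e' : F) ^ p * θ ^ j := by
      have := congrArg Units.val he
      simpa [ha', hθ'] using this
    rw [htr, hval]
  · rintro ⟨e, j, he, hj0, hjp, htreq⟩
    set x : F := e ^ p * θ ^ j with hx
    have hxne : x ≠ 0 := mul_ne_zero (pow_ne_zero _ he) (pow_ne_zero _ hθ0)
    set e' : Fˣ := Units.mk0 e he with he'
    set xu : Fˣ := e' ^ p * θ' ^ j with hxu
    have hxuval : (xu : F) = x := by simp [hxu, he', hθ', hx]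
    have hE : d 0 + (d 0)⁻¹ = x + x⁻¹ := by rw [← htr]; exact htreq
    have hzero : (d 0 - x) * (d 0 - x⁻¹) = 0 := by
      have hxy : x * x⁻¹ = 1 := mul_inv_cancel₀ hxne
      have hab : d 0 * (d 0)⁻¹ = 1 := mul_inv_cancel₀ ha
      linear_combination (d 0) * hE + hxy - hab
    rcases mul_eq_zero.mp hzero with h | h
    · refine (key_units hp hcardm hpm θ' hθord a').mpr ⟨e', j, hj0, hjp, ?_⟩
      apply Units.ext
      rw [ha', ← hxu]
      simp only [Units.val_mk0]
      rw [sub_eq_zero] at h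
      rw [h, hxuval]
    · have haeq : a' = xu⁻¹ := by
        apply Units.ext
        rw [sub_eq_zero] at h
        simp only [ha', Units.val_mk0, h]
        rw [← hxuval]
        exact (Units.val_inv_eq_inv_val xu).symm
      have hxudvd : p ∣ orderOf xu :=
        (key_units hp hcardm hpm θ' hθord xu).mpr ⟨e', j, hj0, hjp, rfl⟩
      rwa [haeq, orderOf_inv]
end

section
/- Let G = PSL_2(53) and let Q be a Sylow 2-subgroup of G (which has order 4). Then there exists g ∈ G such that every element of the coset gQ has even order. -/
open Matrix Pointwise
open scoped MatrixGroups

/-!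
Any two Sylow 2-subgroups of `PSL₂(53)` are conjugate, and conjugation by `c` maps a coset `g • P`
onto the coset `(c g c⁻¹) • (c P c⁻¹)` while preserving orders, so one Sylow subgroup suffices.
Since `23 ^ 2 = -1` in `𝔽₅₃`, the matrices `diag(23, -23)` and `!![0, 1; -1, 0]` generate a
quaternion group of order 8 in `SL₂(53)`, whose image `Q₀` in `PSL₂(53)` is a Klein four-group;
it is Sylow because `|PSL₂(53)| = 74412 = 4 * 18603`. Finally each of the four elements of
`g₀ • Q₀`, for `g₀ = !![36, 21; 1, 33]`, has order `26`: its lifts `A` to `SL₂(53)` satisfy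
`A ^ 26 = ±1` but `A ^ 13 ≠ ±1`.
-/

section Group

variable {G : Type*} [Group G]

theorem dvd_orderOf_of_pow_mul_eq_one {p : ℕ} [Fact p.Prime] {x : G} {m : ℕ}
    (h : x ^ (m * p) = 1) (hm : x ^ m ≠ 1) : p ∣ orderOf x :=
  orderOf_eq_prime (by rwa [← pow_mul]) hm ▸ orderOf_pow_dvd m

namespace Subgroup

def kleinFour (x y : G) (hx : x * x = 1) (hy : y * y = 1) (hxy : x * y = y * x) :
    Subgroup G where
  carrier := {1, x, y, x * y}
  one_mem' := Or.inl rfl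
  mul_mem' := by
    have hxxy : x * (x * y) = y := by rw [← mul_assoc, hx, one_mul]
    have hyxy : y * (x * y) = x := by rw [hxy, ← mul_assoc, hy, one_mul]
    have hxyx : x * y * x = y := by rw [hxy, mul_assoc, hx, mul_one]
    have hxyy : x * y * y = x := by rw [mul_assoc, hy, mul_one]
    have hxyxy : x * y * (x * y) = 1 := by rw [← mul_assoc, hxyx, hy]
    rintro a b (rfl | rfl | rfl | rfl) (rfl | rfl | rfl | rfl) <;>
      simp [hx, hy, hxxy, hyxy, hxyx, hxyy, hxyxy, ← hxy]
  inv_mem' := by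
    have hx' : x⁻¹ = x := inv_eq_of_mul_eq_one_right hx
    have hy' : y⁻¹ = y := inv_eq_of_mul_eq_one_right hy
    rintro a (rfl | rfl | rfl | rfl) <;> simp [hx', hy', hxy]

variable {x y : G} {hx : x * x = 1} {hy : y * y = 1} {hxy : x * y = y * x}

theorem mem_kleinFour {q : G} :
    q ∈ kleinFour x y hx hy hxy ↔ q = 1 ∨ q = x ∨ q = y ∨ q = x * y :=
  Iff.rfl

theorem card_kleinFour (hx1 : x ≠ 1) (hy1 : y ≠ 1) (hxy1 : x ≠ y) :
    Nat.card (kleinFour x y hx hy hxy) = 4 := by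
  have hxy_ne_one : x * y ≠ 1 := fun h => hxy1 (mul_left_cancel (h.trans hx.symm)).symm
  have hxy_ne_x : x * y ≠ x := fun h => hy1 (mul_eq_left.mp h)
  have hxy_ne_y : x * y ≠ y := fun h => hx1 (mul_eq_right.mp h)
  rw [← SetLike.coe_sort_coe, Nat.card_coe_set_eq]
  show Set.ncard {1, x, y, x * y} = 4
  rw [Set.ncard_insert_of_notMem (by simp [hx1.symm, hy1.symm, hxy_ne_one.symm]),
    Set.ncard_insert_of_notMem (by simp [hxy1, hxy_ne_x.symm]),
    Set.ncard_pair hxy_ne_y.symm]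

end Subgroup

theorem Sylow.exists_smul_subset_of_conj_mem {p : ℕ} [Fact p.Prime] [Finite (Sylow p G)]
    {S : Set G} (hS : ∀ c, ∀ h ∈ S, c * h * c⁻¹ ∈ S) (P Q : Sylow p G) {g : G}
    (hg : g • (P : Set G) ⊆ S) : ∃ g' : G, g' • (Q : Set G) ⊆ S := by
  obtain ⟨c, rfl⟩ := MulAction.exists_smul_eq G P Q
  refine ⟨c * g * c⁻¹, ?_⟩
  rintro _ ⟨q, hq, rfl⟩
  obtain ⟨r, hr, rfl⟩ := (Subgroup.mem_smul_pointwise_iff_exists _ _ _).mp hq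
  simpa [MulAut.smul_def, mul_assoc] using hS c _ (hg ⟨r, hr, rfl⟩)

end Group

theorem Matrix.card_GL_eq_card_units_mul_card_SL {n R : Type*} [Fintype n] [DecidableEq n]
    [Nonempty n] [CommRing R] :
    Nat.card (GL n R) = Nat.card Rˣ * Nat.card (SpecialLinearGroup n R) := by
  have hrange : SpecialLinearGroup.toGL.range = (GeneralLinearGroup.det : GL n R →* Rˣ).ker := by
    ext M
    refine ⟨?_, fun h => ⟨⟨M, congrArg Units.val h⟩, Units.ext rfl⟩⟩
    rintro ⟨A, rfl⟩
    exact SpecialLinearGroup.coeToGL_det A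
  rw [Subgroup.card_eq_card_quotient_mul_card_subgroup GeneralLinearGroup.det.ker,
    Nat.card_congr (QuotientGroup.quotientKerEquivOfSurjective _
      GeneralLinearGroup.det_surjective).toEquiv, ← hrange,
    Nat.card_congr (MonoidHom.ofInjective SpecialLinearGroup.toGL_injective).toEquiv.symm]

namespace Matrix.SpecialLinearGroup

variable {R : Type*} [CommRing R] [NoZeroDivisors R]

theorem mem_center_iff_eq_one_or_eq_neg_one {A : SL(2, R)} :
    A ∈ Subgroup.center SL(2, R) ↔ A = 1 ∨ A = -1 := by
  have hneg : scalar (Fin 2) (-1 : R) = ↑(-1 : SL(2, R)) := by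
    rw [map_neg, map_one, coe_neg, coe_one]
  rw [mem_center_iff]
  constructor
  · rintro ⟨r, hr, hA⟩
    rw [Fintype.card_fin, sq_eq_one_iff] at hr
    rcases hr with rfl | rfl
    · exact Or.inl (Subtype.ext (by rw [← hA]; simp))
    · exact Or.inr (Subtype.ext (hA.symm.trans hneg))
  · rintro (rfl | rfl)
    · exact ⟨1, by simp, by simp⟩
    · exact ⟨-1, by simp, hneg⟩

theorem card_center_eq_two (hR : (-1 : R) ≠ 1) : Nat.card (Subgroup.center SL(2, R)) = 2 := by
  have hne : (1 : SL(2, R)) ≠ -1 := fun h =>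
    hR (by simpa using (congrFun₂ (congrArg Subtype.val h) 0 0).symm)
  have hset : (Subgroup.center SL(2, R) : Set SL(2, R)) = {1, -1} := by
    ext A
    exact mem_center_iff_eq_one_or_eq_neg_one
  rw [← SetLike.coe_sort_coe, hset, Nat.card_coe_set_eq, Set.ncard_pair hne]

end Matrix.SpecialLinearGroup

namespace Matrix.ProjectiveSpecialLinearGroup

variable {R : Type*} [CommRing R] [NoZeroDivisors R]

theorem mk_eq_one_iff {A : SL(2, R)} : (A : PSL(2, R)) = 1 ↔ A = 1 ∨ A = -1 := by
  rw [QuotientGroup.eq_one_iff, SpecialLinearGroup.mem_center_iff_eq_one_or_eq_neg_one]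

theorem mk_eq_mk_iff {A B : SL(2, R)} : (A : PSL(2, R)) = B ↔ A = B ∨ A = -B := by
  rw [QuotientGroup.eq, SpecialLinearGroup.mem_center_iff_eq_one_or_eq_neg_one, inv_mul_eq_one,
    inv_mul_eq_iff_eq_mul, mul_neg_one, eq_comm (a := B), neg_eq_iff_eq_neg]

theorem two_dvd_orderOf_mk {A : SL(2, R)} {m : ℕ} (h : A ^ (m * 2) = 1 ∨ A ^ (m * 2) = -1)
    (hm : ¬(A ^ m = 1 ∨ A ^ m = -1)) : 2 ∣ orderOf (A : PSL(2, R)) :=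
  dvd_orderOf_of_pow_mul_eq_one (by rwa [← QuotientGroup.mk_pow, mk_eq_one_iff])
    (by rwa [Ne, ← QuotientGroup.mk_pow, mk_eq_one_iff])

theorem card_SL_eq_card_mul_two (hR : (-1 : R) ≠ 1) :
    Nat.card SL(2, R) = Nat.card PSL(2, R) * 2 := by
  rw [Subgroup.card_eq_card_quotient_mul_card_subgroup (Subgroup.center SL(2, R)),
    SpecialLinearGroup.card_center_eq_two hR]

end Matrix.ProjectiveSpecialLinearGroup

namespace PSL2ZMod53

instance : Fact (Nat.Prime 53) := ⟨by norm_num⟩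

open ProjectiveSpecialLinearGroup

theorem card_PSL : Nat.card PSL(2, ZMod 53) = 74412 := by
  have hGL := card_GL_eq_card_units_mul_card_SL (n := Fin 2) (R := ZMod 53)
  have hSL := card_SL_eq_card_mul_two (R := ZMod 53) (by decide)
  rw [card_GL_field, Nat.card_units, Nat.card_zmod, hSL] at hGL
  norm_num [Fin.prod_univ_two, -Nat.card_eq_fintype_card] at hGL
  omega

def quatI : SL(2, ZMod 53) := ⟨!![23, 0; 0, 30], by decide⟩
def quatJ : SL(2, ZMod 53) := ⟨!![0, 1; 52, 0], by decide⟩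

def g₀ : SL(2, ZMod 53) := ⟨!![36, 21; 1, 33], by decide⟩

def Q₀ : Subgroup PSL(2, ZMod 53) :=
  Subgroup.kleinFour quatI quatJ
    (by rw [← QuotientGroup.mk_mul, mk_eq_one_iff]; decide)
    (by rw [← QuotientGroup.mk_mul, mk_eq_one_iff]; decide)
    (by rw [← QuotientGroup.mk_mul, ← QuotientGroup.mk_mul, mk_eq_mk_iff]; decide)

theorem card_Q₀ : Nat.card Q₀ = 4 :=
  Subgroup.card_kleinFour (by rw [Ne, mk_eq_one_iff]; decide) (by rw [Ne, mk_eq_one_iff]; decide)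
    (by rw [Ne, mk_eq_mk_iff]; decide)

def sylowQ₀ : Sylow 2 PSL(2, ZMod 53) :=
  IsPGroup.toSylow (IsPGroup.of_card (n := 2) card_Q₀) (by
    have := Q₀.card_mul_index
    rw [card_Q₀, card_PSL] at this
    omega)

set_option maxRecDepth 10000 in
theorem two_dvd_orderOf_g₀_mul {q : PSL(2, ZMod 53)} (hq : q ∈ Q₀) :
    2 ∣ orderOf ((g₀ : PSL(2, ZMod 53)) * q) := by
  rcases Subgroup.mem_kleinFour.mp hq with rfl | rfl | rfl | rfl
  · rw [mul_one]; exact two_dvd_orderOf_mk (m := 13) (by decide) (by decide)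
  · exact two_dvd_orderOf_mk (A := g₀ * quatI) (m := 13) (by decide) (by decide)
  · exact two_dvd_orderOf_mk (A := g₀ * quatJ) (m := 13) (by decide) (by decide)
  · exact two_dvd_orderOf_mk (A := g₀ * (quatI * quatJ)) (m := 13) (by decide) (by decide)

end PSL2ZMod53

open PSL2ZMod53 in
/-- Thompson's theorem: in `G = PSL₂(53)` there is a coset `gQ` of a Sylow `2`-subgroup
`Q` (of order `4`) all of whose elements have even order. -/
theorem thompson_PSL2_53
    (Q : Sylow 2 (Matrix.ProjectiveSpecialLinearGroup (Fin 2) (ZMod 53))) :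
    ∃ g : Matrix.ProjectiveSpecialLinearGroup (Fin 2) (ZMod 53),
      ∀ h ∈ g • ((Q : Subgroup (Matrix.ProjectiveSpecialLinearGroup (Fin 2) (ZMod 53))) :
          Set (Matrix.ProjectiveSpecialLinearGroup (Fin 2) (ZMod 53))),
        2 ∣ orderOf h := by
  refine sylowQ₀.exists_smul_subset_of_conj_mem (S := {h | 2 ∣ orderOf h}) (g := g₀) ?_ Q ?_
  · intro c h hh
    rwa [Set.mem_ofPred_eq, ← MulAut.conj_apply, MulEquiv.orderOf_eq]
  · rintro _ ⟨q, hq, rfl⟩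
    exact two_dvd_orderOf_g₀_mul hq
end

section
/- Let D be a UFD and let S be the set of irreducible factors of a fixed nonzero element f ∈ D. If D has the property that, after inverting all irreducible elements not associate to a divisor of f, only finitely many height-one prime ideals remain, then the resulting localization is a principal ideal domain (in fact a semilocal PID). -/
/-!
Inverting elements of a UFD again gives a UFD, so it suffices to show that a UFD `R` with finitely
many minimal nonzero primes is a semilocal PID. In a UFD every nonzero prime `P` contains a prime
element `p`, and `(p)` is a minimal nonzero prime; moreover every element of `P` is divisible by
some prime, so `P` is covered by the finitely many minimal nonzero primes. Prime avoidance puts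
`P` inside one of them, `Q`, and minimality of `Q` forces `(p) = P = Q`. Hence every nonzero prime
is principal, and every maximal ideal other than `⊥` is one of the finitely many minimal nonzero
primes.
-/

def minimalNonzeroPrimes (R : Type*) [CommRing R] : Set (Ideal R) :=
  {P | P.IsPrime ∧ P ≠ ⊥ ∧ ∀ Q : Ideal R, Q.IsPrime → Q ≠ ⊥ → Q ≤ P → Q = P}

namespace UniqueFactorizationMonoid

variable {R : Type*} [CommRing R] [UniqueFactorizationMonoid R]

theorem span_singleton_mem_minimalNonzeroPrimes {p : R} (hp : Prime p) :
    Ideal.span {p} ∈ minimalNonzeroPrimes R := by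
  refine ⟨Ideal.isPrime_span_singleton_of_prime hp, by simpa using hp.ne_zero,
    fun Q hQ hQ0 hQp => le_antisymm hQp ?_⟩
  obtain ⟨q, hqQ, hq⟩ := hQ.exists_mem_prime_of_ne_bot hQ0
  have hpq : Associated p q := hp.associated_of_dvd hq (Ideal.mem_span_singleton.1 (hQp hqQ))
  exact (Ideal.span_singleton_le_iff_mem _).2 (Q.mem_of_dvd hpq.symm.dvd hqQ)

theorem exists_prime_dvd_of_mem {P : Ideal R} (hP : P.IsPrime) (hP0 : P ≠ ⊥) {x : R}
    (hx : x ∈ P) : ∃ q, Prime q ∧ q ∣ x := by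
  by_cases hx0 : x = 0
  · obtain ⟨p, -, hp⟩ := hP.exists_mem_prime_of_ne_bot hP0
    exact ⟨p, hp, hx0 ▸ dvd_zero p⟩
  · have hxu : ¬IsUnit x := fun hu => hP.ne_top (Ideal.eq_top_of_isUnit_mem _ hx hu)
    obtain ⟨q, hq⟩ := exists_mem_factors hx0 hxu
    exact ⟨q, prime_of_factor q hq, dvd_of_mem_factors hq⟩

variable (hfin : (minimalNonzeroPrimes R).Finite)
include hfin

theorem exists_le_mem_minimalNonzeroPrimes {P : Ideal R} (hP : P.IsPrime) (hP0 : P ≠ ⊥) :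
    ∃ Q ∈ minimalNonzeroPrimes R, P ≤ Q := by
  have hcover : (P : Set R) ⊆ ⋃ Q ∈ (hfin.toFinset : Set (Ideal R)), (Q : Set R) := by
    intro x hx
    obtain ⟨q, hq, hqx⟩ := exists_prime_dvd_of_mem hP hP0 hx
    exact Set.mem_biUnion (by simpa using span_singleton_mem_minimalNonzeroPrimes hq)
      (Ideal.mem_span_singleton.2 hqx)
  obtain ⟨Q, hQ, hPQ⟩ := (Ideal.subset_union_prime (f := id) ⊥ ⊥
    fun Q hQ _ _ => (hfin.mem_toFinset.1 hQ).1).1 hcover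
  exact ⟨Q, hfin.mem_toFinset.1 hQ, hPQ⟩

theorem exists_prime_eq_span_of_finite_minimalNonzeroPrimes {P : Ideal R} (hP : P.IsPrime)
    (hP0 : P ≠ ⊥) : ∃ p, Prime p ∧ P = Ideal.span {p} ∧ P ∈ minimalNonzeroPrimes R := by
  obtain ⟨Q, hQ, hPQ⟩ := exists_le_mem_minimalNonzeroPrimes hfin hP hP0
  obtain ⟨p, hpP, hp⟩ := hP.exists_mem_prime_of_ne_bot hP0
  have hpP' : Ideal.span {p} ≤ P := (Ideal.span_singleton_le_iff_mem _).2 hpP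
  have hpQ : Ideal.span {p} = Q :=
    hQ.2.2 _ (Ideal.isPrime_span_singleton_of_prime hp) (by simpa using hp.ne_zero) (hpP'.trans hPQ)
  have hPeq : P = Ideal.span {p} := le_antisymm (hpQ ▸ hPQ) hpP'
  exact ⟨p, hp, hPeq, hPeq ▸ hpQ ▸ hQ⟩

theorem isPrincipalIdealRing_of_finite_minimalNonzeroPrimes : IsPrincipalIdealRing R :=
  .of_prime_ne_bot fun P hP hP0 => by
    obtain ⟨p, -, hPp, -⟩ := exists_prime_eq_span_of_finite_minimalNonzeroPrimes hfin hP hP0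
    exact ⟨p, hPp⟩

theorem finite_setOf_isMaximal_of_finite_minimalNonzeroPrimes :
    {P : Ideal R | P.IsMaximal}.Finite := by
  refine (hfin.insert ⊥).subset fun P hP => ?_
  by_cases hP0 : P = ⊥
  · exact Or.inl hP0
  · obtain ⟨-, -, -, hPmin⟩ :=
      exists_prime_eq_span_of_finite_minimalNonzeroPrimes hfin hP.isPrime hP0
    exact Or.inr hPmin

end UniqueFactorizationMonoid

open UniqueFactorizationMonoid in
theorem localization_semilocal_PID_general
    (D : Type*) [CommRing D] [IsDomain D] [UniqueFactorizationMonoid D]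
    (f : D)
    (D' : Type*) [CommRing D'] [Algebra D D']
    [IsLocalization (Submonoid.closure {s : D | Irreducible s ∧ ¬ s ∣ f}) D']
    (hfin : {P : Ideal D' | P.IsPrime ∧ P ≠ ⊥ ∧
      ∀ Q : Ideal D', Q.IsPrime → Q ≠ ⊥ → Q ≤ P → Q = P}.Finite) :
    IsDomain D' ∧ IsPrincipalIdealRing D' ∧ {P : Ideal D' | P.IsMaximal}.Finite := by
  set M := Submonoid.closure {s : D | Irreducible s ∧ ¬ s ∣ f}
  have hM : M ≤ nonZeroDivisors D :=
    Submonoid.closure_le.2 fun s hs => mem_nonZeroDivisors_of_ne_zero hs.1.ne_zero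
  have : UniqueFactorizationMonoid D' := .of_isLocalization M D'
  exact ⟨IsLocalization.isDomain_of_le_nonZeroDivisors D' hM,
    isPrincipalIdealRing_of_finite_minimalNonzeroPrimes hfin,
    finite_setOf_isMaximal_of_finite_minimalNonzeroPrimes hfin⟩

/-- The reduction step in the proof of Theorem 2.2: let `D` be a UFD, `f ∈ D` nonzero,
and let `D'` be the localization of `D` at the multiplicative set generated by the
irreducible elements not dividing `f` (equivalently, not associate to any irreducible
divisor of `f`).  If `D'` has only finitely many height-one prime ideals (the minimal
nonzero primes), then `D'` is a principal ideal domain with only finitely many maximal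
ideals, i.e. a semilocal PID. -/
theorem localization_semilocal_PID
    (D : Type*) [CommRing D] [IsDomain D] [UniqueFactorizationMonoid D]
    (f : D) (hf : f ≠ 0)
    (D' : Type*) [CommRing D'] [Algebra D D']
    [IsLocalization (Submonoid.closure {s : D | Irreducible s ∧ ¬ s ∣ f}) D']
    (hfin : {P : Ideal D' | P.IsPrime ∧ P ≠ ⊥ ∧
      ∀ Q : Ideal D', Q.IsPrime → Q ≠ ⊥ → Q ≤ P → Q = P}.Finite) :
    IsDomain D' ∧ IsPrincipalIdealRing D' ∧ {P : Ideal D' | P.IsMaximal}.Finite :=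
  localization_semilocal_PID_general D f D' hfin
end
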